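/- arXiv:1806.02706 — 3 statements merged into one kernel-verified Lean document; each statement's English description precedes it below -/
import Mathlib

section
/- Let Ω be a set, f₁, f₂ : Ω → ℝ, and h : ℝ × ℝ → ℝ non-decreasing in each argument, and set f₃ = h(f₁, f₂). Then the Pareto-optimal set of the three-objective problem (f₁, f₂, f₃) equals the Pareto-optimal set of the two-objective problem (f₁, f₂). -/
/-- Theorem 1 (Pareto set version): the Pareto-optimal set of `(f₁, f₂, f₃)`
with `f₃ = h (f₁, f₂)`, `h` non-decreasing in each argument, equals the
Pareto-optimal set of `(f₁, f₂)`. -/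
theorem stmt_1 {Ω : Type*} (f₁ f₂ : Ω → ℝ) (h : ℝ → ℝ → ℝ)
    (hmono : ∀ ⦃a₁ b₁ a₂ b₂ : ℝ⦄, a₁ ≤ b₁ → a₂ ≤ b₂ → h a₁ a₂ ≤ h b₁ b₂)
    (f₃ : Ω → ℝ) (hf₃ : ∀ x, f₃ x = h (f₁ x) (f₂ x)) :
    {x : Ω | ¬ ∃ y : Ω, (f₁ y ≤ f₁ x ∧ f₂ y ≤ f₂ x ∧ f₃ y ≤ f₃ x) ∧
        (f₁ y < f₁ x ∨ f₂ y < f₂ x ∨ f₃ y < f₃ x)} =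
    {x : Ω | ¬ ∃ y : Ω, (f₁ y ≤ f₁ x ∧ f₂ y ≤ f₂ x) ∧
        (f₁ y < f₁ x ∨ f₂ y < f₂ x)} := by
  ext x
  simp only [Set.mem_setOf_eq, not_exists]
  constructor
  · intro H y ⟨⟨h1, h2⟩, hs⟩
    have h3 : f₃ y ≤ f₃ x := by rw [hf₃, hf₃]; exact hmono h1 h2
    exact H y ⟨⟨h1, h2, h3⟩, by tauto⟩
  · intro H y ⟨⟨h1, h2, h3⟩, hs⟩
    rcases hs with hs | hs | hs
    · exact H y ⟨⟨h1, h2⟩, Or.inl hs⟩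
    · exact H y ⟨⟨h1, h2⟩, Or.inr hs⟩
    · rcases lt_or_eq_of_le h1 with h1' | h1'
      · exact H y ⟨⟨h1, h2⟩, Or.inl h1'⟩
      rcases lt_or_eq_of_le h2 with h2' | h2'
      · exact H y ⟨⟨h1, h2⟩, Or.inr h2'⟩
      have : f₃ y = f₃ x := by rw [hf₃, hf₃, h1', h2']
      exact absurd this (ne_of_lt hs)
end

section
/- Let a, b ∈ ℝ and let η₁ < η₂ < ⋯ < η_k be real thresholds. Define the clipping sequence c₀(t) = min t η₁, cᵢ(t) = min (max t ηᵢ) ηᵢ₊₁ for 1 ≤ i ≤ k−1, and c_k(t) = max t η_k. If cᵢ(a) ≤ cᵢ(b) for all i ∈ {0,…,k}, then a ≤ b; and if additionally cⱼ(a) < cⱼ(b) for some j, then a < b. -/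
/-- The clipping sequence associated with strictly increasing thresholds
`η 0 < … < η (k-1)`: `c 0 t = min t (η 0)`, `c i t = min (max t (η (i-1))) (η i)`
for `1 ≤ i ≤ k-1`, and `c k t = max t (η (k-1))`. -/
noncomputable def clipSeq {k : ℕ} (hk : 0 < k) (η : Fin k → ℝ)
    (i : Fin (k + 1)) (t : ℝ) : ℝ :=
  if h0 : (i : ℕ) = 0 then min t (η ⟨0, hk⟩)
  else if hl : (i : ℕ) = k then max t (η ⟨k - 1, by omega⟩)
  else
    min (max t (η ⟨(i : ℕ) - 1, by have := i.isLt; omega⟩))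
      (η ⟨(i : ℕ), by have := i.isLt; omega⟩)

/-- The clipping sequence reflects the order, and reflects strict inequality
in the presence of a strict component. -/
theorem stmt_5 {k : ℕ} (hk : 0 < k) (η : Fin k → ℝ) (hη : StrictMono η)
    (a b : ℝ) (hle : ∀ i : Fin (k + 1), clipSeq hk η i a ≤ clipSeq hk η i b) :
    a ≤ b ∧ ((∃ j : Fin (k + 1), clipSeq hk η j a < clipSeq hk η j b) → a < b) := by
  classical
  have key : a ≤ b := by
    by_contra hab
    push_neg at hab  -- b < a
    by_cases hb0 : b < η ⟨0, hk⟩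
    · have h := hle ⟨0, by omega⟩
      simp only [clipSeq, dif_pos rfl] at h
      rw [min_eq_left hb0.le] at h
      exact absurd (lt_min hab hb0) (not_lt.mpr h)
    by_cases hbk : η ⟨k - 1, by omega⟩ ≤ b
    · have h := hle ⟨k, by omega⟩
      have hk0 : k ≠ 0 := by omega
      simp only [clipSeq, dif_neg hk0, dif_pos rfl, dite_true] at h
      rw [max_eq_left hbk] at h
      exact absurd (lt_of_lt_of_le hab (le_max_left _ _)) (not_lt.mpr h)
    push_neg at hb0 hbk
    have hex : ∃ n, ∃ hn : n < k, b < η ⟨n, hn⟩ := ⟨k - 1, by omega, hbk⟩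
    set m := Nat.find hex with hm
    obtain ⟨hmk', hbm'⟩ := Nat.find_spec hex
    have hmk : m < k := hmk'
    have hbm : b < η ⟨m, hmk⟩ := hbm'
    have hm1 : m ≠ 0 := by
      intro h0
      apply absurd hbm
      push_neg
      calc η ⟨m, hmk⟩ = η ⟨0, hk⟩ := congrArg η (Fin.mk_eq_mk.mpr h0)
        _ ≤ b := hb0
    have hprev : η ⟨m - 1, by omega⟩ ≤ b := by
      by_contra hc
      push_neg at hc
      exact absurd ⟨by omega, hc⟩ (Nat.find_min hex (by omega))
    have h := hle ⟨m, by omega⟩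
    have hmk' : m ≠ k := by omega
    simp only [clipSeq, dif_neg hm1, dif_neg hmk'] at h
    rw [max_eq_left hprev, min_eq_left hbm.le] at h
    have : b < min (max a (η ⟨m - 1, by omega⟩)) (η ⟨m, by omega⟩) :=
      lt_min (lt_of_lt_of_le hab (le_max_left _ _)) hbm
    exact absurd this (not_lt.mpr h)
  refine ⟨key, fun ⟨j, hj⟩ => ?_⟩
  rcases lt_or_eq_of_le key with h | h
  · exact h
  · rw [h] at hj
    exact absurd hj (lt_irrefl _)
end

section
/- Let Ω be a set and γ₁, γ₂ : Ω → ℝ. Fix a real η with η strictly between the infimum and supremum of γ₂, and let φ₁, φ₂, φ₃ : ℝ → ℝ be strictly increasing. Define f₁ = φ₁ ∘ γ₁, f₂(x) = φ₂(min (γ₂ x) η), f₃(x) = φ₃(max (γ₂ x) η). Then for all x, y ∈ Ω, x Pareto-dominates y with respect to (γ₁, γ₂) if and only if x Pareto-dominates y with respect to (f₁, f₂, f₃). -/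
lemma aux_le (a b η : ℝ) : a ≤ b ↔ min a η ≤ min b η ∧ max a η ≤ max b η := by
  simp only [min_def, max_def]
  split_ifs <;> constructor <;> intro h <;>
    first | constructor <;> linarith | linarith

lemma aux_lt (a b η : ℝ) : a < b ↔ min a η < min b η ∨ max a η < max b η := by
  simp only [min_def, max_def]
  split_ifs <;> constructor <;> intro h <;>
    first | linarith | (rcases h with h | h <;> linarith) | (left; linarith) | (right; linarith)

/-- Splitting `γ₂` at a threshold `η` strictly between the infimum and
supremum of `γ₂` and composing with strictly increasing functions leaves the
Pareto dominance relation unchanged. -/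
theorem stmt_6 {Ω : Type*} (γ₁ γ₂ : Ω → ℝ) (η : ℝ)
    (hη : sInf (Set.range γ₂) < η ∧ η < sSup (Set.range γ₂))
    (φ₁ φ₂ φ₃ : ℝ → ℝ) (hφ₁ : StrictMono φ₁) (hφ₂ : StrictMono φ₂)
    (hφ₃ : StrictMono φ₃) (f₁ f₂ f₃ : Ω → ℝ)
    (hf₁ : ∀ x, f₁ x = φ₁ (γ₁ x)) (hf₂ : ∀ x, f₂ x = φ₂ (min (γ₂ x) η))
    (hf₃ : ∀ x, f₃ x = φ₃ (max (γ₂ x) η)) (x y : Ω) :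
    ((γ₁ x ≤ γ₁ y ∧ γ₂ x ≤ γ₂ y) ∧ (γ₁ x < γ₁ y ∨ γ₂ x < γ₂ y)) ↔
    ((f₁ x ≤ f₁ y ∧ f₂ x ≤ f₂ y ∧ f₃ x ≤ f₃ y) ∧
      (f₁ x < f₁ y ∨ f₂ x < f₂ y ∨ f₃ x < f₃ y)) := by
  simp only [hf₁, hf₂, hf₃, hφ₁.le_iff_le, hφ₂.le_iff_le, hφ₃.le_iff_le,
    hφ₁.lt_iff_lt, hφ₂.lt_iff_lt, hφ₃.lt_iff_lt]
  have h1 := aux_le (γ₂ x) (γ₂ y) η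
  have h2 := aux_lt (γ₂ x) (γ₂ y) η
  tauto
end
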